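/- Let E be a Frobenius class of triangles in an essentially small triangulated category K, with quotient functor π: K → S(K;E). Then the assignments J ↦ π⁻¹(J) and C ↦ π(C) are mutually inverse, order-preserving bijections between the thick subcategories J of the triangulated category S(K;E) and the additive subcategories C of K which contain proj(E) = inj(E), are closed under direct summands, and satisfy the E-two-out-of-three property: for every triangle X→Y→Z→ΣX in E, if two of X, Y, Z lie in C then so does the third. -/

import Mathlib

/-!
Common definitions for formalizing "Relative stable categories and birationality"
(Balmer–Stevenson): proper classes of triangles in the sense of Beligiannis,
relative projectives/injectives, Frobenius classes, and abstract models of the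
relative stable category together with Beligiannis' triangulation.
-/

noncomputable section

open CategoryTheory Limits Pretriangulated ZeroObject

universe v u v' u' v'' u'' v₁ u₁ v₂ u₂

namespace RelStable

variable {K : Type u} [Category.{v} K] [Preadditive K] [HasZeroObject K]
  [HasShift K ℤ] [∀ n : ℤ, (CategoryTheory.shiftFunctor K n).Additive] [Pretriangulated K]

/-- `f` is an `E`-monomorphism: it occurs as the first map of a triangle in `E`. -/
def SMono (E : Set (Triangle K)) {X Y : K} (f : X ⟶ Y) : Prop :=
  ∃ (Z : K) (g : Y ⟶ Z) (h : Z ⟶ X⟦(1:ℤ)⟧), Triangle.mk f g h ∈ E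

/-- `g` is an `E`-epimorphism: it occurs as the second map of a triangle in `E`. -/
def SEpi (E : Set (Triangle K)) {Y Z : K} (g : Y ⟶ Z) : Prop :=
  ∃ (X : K) (f : X ⟶ Y) (h : Z ⟶ X⟦(1:ℤ)⟧), Triangle.mk f g h ∈ E

/-- `h` is an `E`-phantom: up to isomorphism of its target with a suspension, it
occurs as the third map of a triangle in `E`. -/
def SPhantom (E : Set (Triangle K)) {Z W : K} (h : Z ⟶ W) : Prop :=
  ∃ (X Y : K) (f : X ⟶ Y) (g : Y ⟶ Z) (h' : Z ⟶ X⟦(1:ℤ)⟧) (e : (X⟦(1:ℤ)⟧ : K) ≅ W),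
    Triangle.mk f g h' ∈ E ∧ h = h' ≫ e.hom

/-- `P` is `E`-projective: `Hom(P,-)` takes triangles in `E` to short exact sequences. -/
def EProjective (E : Set (Triangle K)) (P : K) : Prop :=
  ∀ T ∈ E,
    (∀ a : P ⟶ T.obj₁, a ≫ T.mor₁ = 0 → a = 0) ∧
    (∀ b : P ⟶ T.obj₂, b ≫ T.mor₂ = 0 → ∃ a : P ⟶ T.obj₁, a ≫ T.mor₁ = b) ∧
    (∀ c : P ⟶ T.obj₃, ∃ b : P ⟶ T.obj₂, b ≫ T.mor₂ = c)

/-- `I` is `E`-injective: `Hom(-,I)` takes triangles in `E` to short exact sequences. -/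
def EInjective (E : Set (Triangle K)) (I : K) : Prop :=
  ∀ T ∈ E,
    (∀ a : T.obj₃ ⟶ I, T.mor₂ ≫ a = 0 → a = 0) ∧
    (∀ b : T.obj₂ ⟶ I, T.mor₁ ≫ b = 0 → ∃ a : T.obj₃ ⟶ I, T.mor₂ ≫ a = b) ∧
    (∀ c : T.obj₁ ⟶ I, ∃ b : T.obj₂ ⟶ I, T.mor₁ ≫ b = c)

/-- `K` has enough `E`-projectives: every object admits an `E`-projective precover. -/
def EnoughProjectives (E : Set (Triangle K)) : Prop :=
  ∀ X : K, ∃ (P : K) (p : P ⟶ X), EProjective E P ∧ SEpi E p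

/-- `K` has enough `E`-injectives: every object admits an `E`-injective preenvelope. -/
def EnoughInjectives (E : Set (Triangle K)) : Prop :=
  ∀ X : K, ∃ (I : K) (i : X ⟶ I), EInjective E I ∧ SMono E i

/-- The direct sum of two triangles. -/
def sumTriangle [HasBinaryBiproducts K] (T₁ T₂ : Triangle K) : Triangle K :=
  Triangle.mk (biprod.map T₁.mor₁ T₂.mor₁) (biprod.map T₁.mor₂ T₂.mor₂)
    (biprod.desc (T₁.mor₃ ≫ (shiftFunctor K (1:ℤ)).map biprod.inl)
      (T₂.mor₃ ≫ (shiftFunctor K (1:ℤ)).map biprod.inr))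

/-- A proper class of triangles in the sense of Beligiannis: a class of distinguished
triangles closed under isomorphism, suspension, finite direct sums and retracts,
containing the trivial triangles, whose `E`-monomorphisms are closed under homotopy
pushout, whose `E`-epimorphisms are closed under homotopy pullback, and which is
saturated. -/
structure IsProperClass [HasBinaryBiproducts K] (E : Set (Triangle K)) : Prop where
  subset_dist : ∀ T ∈ E, T ∈ (distTriang K)
  iso_closed : ∀ (T₁ T₂ : Triangle K), (T₁ ≅ T₂) → T₁ ∈ E → T₂ ∈ E
  shift_closed : ∀ T ∈ E, (Triangle.shiftFunctor K (1 : ℤ)).obj T ∈ E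
  sum_closed : ∀ T₁ T₂ : Triangle K, T₁ ∈ E → T₂ ∈ E → sumTriangle T₁ T₂ ∈ E
  retract_closed : ∀ (T₁ T₂ : Triangle K) (i : T₁ ⟶ T₂) (r : T₂ ⟶ T₁),
    i ≫ r = 𝟙 T₁ → T₂ ∈ E → T₁ ∈ E
  contractible₁ : ∀ X : K, contractibleTriangle X ∈ E
  contractible₂ : ∀ Y : K,
    Triangle.mk (0 : (0 : K) ⟶ Y) (𝟙 Y) (0 : Y ⟶ ((0 : K)⟦(1:ℤ)⟧)) ∈ E
  mono_pushout : ∀ {X Y X' : K} (f : X ⟶ Y), SMono E f → ∀ (t : X ⟶ X')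
    (W : K) (u : Y ⊞ X' ⟶ W) (v : W ⟶ X⟦(1:ℤ)⟧),
    Triangle.mk (biprod.lift f t) u v ∈ (distTriang K) → SMono E (biprod.inr ≫ u)
  epi_pullback : ∀ {Y Z Z' : K} (g : Y ⟶ Z), SEpi E g → ∀ (t : Z' ⟶ Z)
    (W : K) (w : W ⟶ Y ⊞ Z') (v : Z ⟶ W⟦(1:ℤ)⟧),
    Triangle.mk w (biprod.desc g t) v ∈ (distTriang K) → SEpi E (w ≫ biprod.snd)
  saturated : ∀ {Y Z : K} (g : Y ⟶ Z), SEpi E g → ∀ {W : K} (k : Z ⟶ W),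
    SPhantom E (g ≫ k) → SPhantom E k

/-- A Frobenius class of triangles: enough projectives, enough injectives, and the
projectives coincide with the injectives. -/
structure IsFrobenius (E : Set (Triangle K)) : Prop where
  enough_proj : EnoughProjectives E
  enough_inj : EnoughInjectives E
  proj_eq_inj : ∀ X : K, EProjective E X ↔ EInjective E X

/-- A morphism factoring through an `E`-projective(-injective) object; these are the
morphisms killed by the quotient functor to the relative stable category. -/
def FactorsThroughProj (E : Set (Triangle K)) {X Y : K} (f : X ⟶ Y) : Prop :=
  ∃ (P : K) (a : X ⟶ P) (b : P ⟶ Y), EProjective E P ∧ a ≫ b = f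

/-- The image of a triangle under a functor equipped with a commutation with shift. -/
def mapTri {C : Type u'} {D : Type v'} [Category C] [Category D]
    [HasShift C ℤ] [HasShift D ℤ] (F : C ⥤ D) (hc : F.CommShift ℤ) (T : Triangle C) :
    Triangle D :=
  Triangle.mk (F.map T.mor₁) (F.map T.mor₂)
    (F.map T.mor₃ ≫ (@Functor.CommShift.commShiftIso _ _ _ _ F ℤ _ _ _ hc (1:ℤ)).hom.app T.obj₁)

/-- An exact (triangulated) functor: additive, commutes with the shift, and sends
distinguished triangles to distinguished triangles. -/
def IsExactFunctor {C : Type u'} {D : Type v'} [Category C] [Category D]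
    [Preadditive C] [Preadditive D] [HasZeroObject C] [HasZeroObject D]
    [HasShift C ℤ] [HasShift D ℤ]
    [∀ n : ℤ, (shiftFunctor C n).Additive] [∀ n : ℤ, (shiftFunctor D n).Additive]
    [Pretriangulated C] [Pretriangulated D] (F : C ⥤ D) : Prop :=
  F.Additive ∧ ∃ hc : F.CommShift ℤ, ∀ T ∈ (distTriang C), mapTri F hc T ∈ (distTriang D)

/-- An abstract model of the relative stable category `S(K;E) = K/proj(E)` together
with Beligiannis' triangulation: a pretriangulated category `S` and an additive
quotient functor `π : K ⥤ S` killing exactly the maps factoring through `proj(E)`,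
such that the suspension of `S` is computed by cofibres of `inj(E)`-preenvelopes,
image-triangles of triangles of `E` are distinguished, and every distinguished
triangle of `S` is isomorphic to such an image-triangle. -/
structure StableModel (E : Set (Triangle K)) where
  S : Type u
  [cat : Category.{v} S]
  [preadd : Preadditive S]
  [zobj : HasZeroObject S]
  [hshift : HasShift S ℤ]
  [shiftAdd : ∀ n : ℤ, (shiftFunctor S n).Additive]
  [pretri : Pretriangulated S]
  π : K ⥤ S
  [πAdd : π.Additive]
  π_full : π.Full
  π_essSurj : π.EssSurj
  π_map_zero_iff : ∀ {X Y : K} (f : X ⟶ Y), π.map f = 0 ↔ FactorsThroughProj E f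
  susp : ∀ T ∈ E, EInjective E T.obj₂ →
    Nonempty (π.obj T.obj₃ ≅ (π.obj T.obj₁)⟦(1:ℤ)⟧)
  imageTriangle_distinguished : ∀ T ∈ E,
    ∃ h' : π.obj T.obj₃ ⟶ (π.obj T.obj₁)⟦(1:ℤ)⟧,
      Triangle.mk (π.map T.mor₁) (π.map T.mor₂) h' ∈ (distTriang S)
  distinguished_iso_image : ∀ T' ∈ (distTriang S), ∃ T ∈ E,
    ∃ h' : π.obj T.obj₃ ⟶ (π.obj T.obj₁)⟦(1:ℤ)⟧,
      Triangle.mk (π.map T.mor₁) (π.map T.mor₂) h' ∈ (distTriang S) ∧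
      Nonempty (T' ≅ Triangle.mk (π.map T.mor₁) (π.map T.mor₂) h')

attribute [instance] StableModel.cat StableModel.preadd StableModel.zobj
  StableModel.hshift StableModel.shiftAdd StableModel.pretri StableModel.πAdd


/-- A morphism factoring through an `E`-injective object. -/
def FactorsThroughInj (E : Set (Triangle K)) {X Y : K} (f : X ⟶ Y) : Prop :=
  ∃ (I : K) (a : X ⟶ I) (b : I ⟶ Y), EInjective E I ∧ a ≫ b = f

/-- The `F`-split triangles: distinguished triangles whose third map is killed by `F`. -/
def splitClass {C : Type u'} {D : Type v'} [Category C] [Category D] [Preadditive C]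
    [HasZeroObject C] [HasShift C ℤ] [∀ n : ℤ, (shiftFunctor C n).Additive]
    [Pretriangulated C] [Limits.HasZeroMorphisms D] (F : C ⥤ D) : Set (Triangle C) :=
  {T | T ∈ (distTriang C) ∧ F.map T.mor₃ = 0}

/-- A thick (triangulatd, summand-closed) subcategory, as a class of objects. -/
def IsThickSubcat {C : Type u'} [Category.{v'} C] [Preadditive C] [HasZeroObject C]
    [HasShift C ℤ] [∀ n : ℤ, (shiftFunctor C n).Additive] [Pretriangulated C]
    [HasBinaryBiproducts C] (T : Set C) : Prop :=
  (∀ X Y : C, (X ≅ Y) → X ∈ T → Y ∈ T) ∧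
  (∀ X : C, IsZero X → X ∈ T) ∧
  (∀ (n : ℤ) (X : C), X ∈ T → (X⟦n⟧ : C) ∈ T) ∧
  (∀ Tr ∈ (distTriang C), Tr.obj₁ ∈ T → Tr.obj₂ ∈ T → Tr.obj₃ ∈ T) ∧
  (∀ X Y : C, (∃ Z : C, Nonempty ((X ⊞ Z) ≅ Y)) → Y ∈ T → X ∈ T)

/-- The smallest thick subcategory containing a given class of objects. -/
def thickClosure {C : Type u'} [Category.{v'} C] [Preadditive C] [HasZeroObject C]
    [HasShift C ℤ] [∀ n : ℤ, (shiftFunctor C n).Additive] [Pretriangulated C]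
    [HasBinaryBiproducts C] (A : Set C) : Set C :=
  {X | ∀ T : Set C, IsThickSubcat T → A ⊆ T → X ∈ T}

/-- An additive subcategory: closed under isomorphism, containing the zero objects and
closed under finite direct sums. -/
def IsAdditiveSubcat {C : Type u'} [Category.{v'} C] [Preadditive C] [HasZeroObject C]
    [HasBinaryBiproducts C] (T : Set C) : Prop :=
  (∀ X Y : C, (X ≅ Y) → X ∈ T → Y ∈ T) ∧
  (∀ X : C, IsZero X → X ∈ T) ∧
  (∀ X Y : C, X ∈ T → Y ∈ T → (X ⊞ Y) ∈ T)

/-- The `E`-two-out-of-three property for a class of objects. -/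
def ETwoOutOfThree (E : Set (Triangle K)) (T : Set K) : Prop :=
  ∀ Tr ∈ E, (Tr.obj₁ ∈ T → Tr.obj₂ ∈ T → Tr.obj₃ ∈ T) ∧
    (Tr.obj₂ ∈ T → Tr.obj₃ ∈ T → Tr.obj₁ ∈ T) ∧
    (Tr.obj₁ ∈ T → Tr.obj₃ ∈ T → Tr.obj₂ ∈ T)

/-- The subcategories of `K` corresponding to thick subcategories of the relative stable
category: additive, containing `proj(E)`, closed under direct summands, and satisfying
the `E`-two-out-of-three property. -/
def GoodSubcat [HasBinaryBiproducts K] (E : Set (Triangle K)) (T : Set K) : Prop :=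
  IsAdditiveSubcat T ∧ (∀ P : K, EProjective E P → P ∈ T) ∧
  (∀ X Y : K, (∃ Z : K, Nonempty ((X ⊞ Z) ≅ Y)) → Y ∈ T → X ∈ T) ∧
  ETwoOutOfThree E T

/-- The essential image of a class of objects under a functor. -/
def imageSet {C : Type u'} {D : Type v'} [Category C] [Category D] (F : C ⥤ D)
    (T : Set C) : Set D :=
  {Y | ∃ X ∈ T, Nonempty (F.obj X ≅ Y)}



section Helpers

variable {C : Type u'} [Category.{v'} C]

lemma shift_mem_of_one_neg_one [HasShift C ℤ] {T : Set C}
    (hiso : ∀ X Y : C, (X ≅ Y) → X ∈ T → Y ∈ T)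
    (h1 : ∀ X : C, X ∈ T → (X⟦(1:ℤ)⟧ : C) ∈ T)
    (hneg : ∀ X : C, X ∈ T → (X⟦(-1:ℤ)⟧ : C) ∈ T)
    (n : ℤ) (X : C) (hX : X ∈ T) : (X⟦n⟧ : C) ∈ T := by
  induction n using Int.induction_on with
  | zero => exact hiso X _ (((shiftFunctorZero C ℤ).app X).symm) hX
  | succ n ih =>
      exact hiso _ _ (((shiftFunctorAdd' C (n:ℤ) 1 ((n:ℤ)+1) rfl).app X).symm) (h1 _ ih)
  | pred n ih =>
      exact hiso _ _ (((shiftFunctorAdd' C (-(n:ℤ)) (-1) (-(n:ℤ)-1) (by ring)).app X).symm)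
        (hneg _ ih)

lemma thick_two_three [Preadditive C] [HasZeroObject C]
    [HasShift C ℤ] [∀ n : ℤ, (shiftFunctor C n).Additive] [Pretriangulated C]
    [HasBinaryBiproducts C] {T : Set C} (hT : IsThickSubcat T) :
    ∀ Tr ∈ (distTriang C),
      (Tr.obj₁ ∈ T → Tr.obj₂ ∈ T → Tr.obj₃ ∈ T) ∧
      (Tr.obj₂ ∈ T → Tr.obj₃ ∈ T → Tr.obj₁ ∈ T) ∧
      (Tr.obj₁ ∈ T → Tr.obj₃ ∈ T → Tr.obj₂ ∈ T) := by
  obtain ⟨hiso, hzero, hshift, htri, hsum⟩ := hT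
  intro Tr hTr
  refine ⟨htri Tr hTr, ?_, ?_⟩
  · intro h2 h3
    have h := htri _ (rot_of_distTriang _ hTr) h2 h3
    have h' := hshift (-1) _ h
    exact hiso _ _ ((shiftFunctorCompIsoId C (1:ℤ) (-1) (by omega)).app Tr.obj₁) h'
  · intro h1 h3
    exact htri _ (inv_rot_of_distTriang _ hTr) (hshift (-1) _ h3) h1

end Helpers

section KeyLemma

variable {K : Type u} [Category.{v} K] [Preadditive K] [HasZeroObject K]
  [HasShift K ℤ] [∀ n : ℤ, (CategoryTheory.shiftFunctor K n).Additive] [Pretriangulated K]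
  [HasBinaryBiproducts K]

/-- `π` of an `E`-projective is a zero object. -/
lemma isZero_pi_of_proj (E : Set (Triangle K)) (D : StableModel E)
    {P : K} (hP : EProjective E P) : IsZero (D.π.obj P) := by
  rw [IsZero.iff_id_eq_zero, ← D.π.map_id]
  exact (D.π_map_zero_iff _).2 ⟨P, 𝟙 P, 𝟙 P, hP, by simp⟩

/-- Good subcategories are closed under stable isomorphism. -/
lemma good_stable_iso_closed (E : Set (Triangle K)) (D : StableModel E)
    {Cs : Set K} (hCs : GoodSubcat E Cs) {X Y : K} (hX : X ∈ Cs)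
    (e : D.π.obj X ≅ D.π.obj Y) : Y ∈ Cs := by
  obtain ⟨⟨hiso, hzero, hsum⟩, hproj, hsummand, h23⟩ := hCs
  obtain ⟨f, hf⟩ := D.π_full.map_surjective e.hom
  obtain ⟨g, hg⟩ := D.π_full.map_surjective e.inv
  have h0 : D.π.map (g ≫ f - 𝟙 Y) = 0 := by
    rw [Functor.map_sub, Functor.map_comp, hf, hg, D.π.map_id, e.inv_hom_id, sub_self]
  obtain ⟨Q, c, d, hQ, hcd⟩ := (D.π_map_zero_iff _).1 h0
  have hsr : biprod.lift g c ≫ biprod.desc f (-d) = 𝟙 Y := by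
    rw [biprod.lift_desc, Preadditive.comp_neg, hcd]; abel
  obtain ⟨Z, p, w, hTr⟩ := Pretriangulated.distinguished_cocone_triangle (biprod.lift g c)
  have hsplit : IsSplitMono (biprod.lift g c) := ⟨⟨⟨biprod.desc f (-d), hsr⟩⟩⟩
  have hmono : Mono (biprod.lift g c) := inferInstance
  have hzero3 : (Triangle.mk (biprod.lift g c) p w).mor₃ = 0 :=
    Pretriangulated.Triangle.mor₃_eq_zero_of_mono₁ _ hTr hmono
  obtain ⟨eiso, -, -⟩ :=
    Pretriangulated.exists_iso_binaryBiproduct_of_distTriang _ hTr hzero3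
  exact hsummand Y (X ⊞ Q) ⟨Z, ⟨eiso.symm⟩⟩ (hsum _ _ hX (hproj Q hQ))

end KeyLemma

/-- Proposition 5.3: `J ↦ π⁻¹(J)` and `C ↦ π(C)` are mutually inverse order-preserving
bijections between thick subcategories of `S(K;E)` and additive subcategories of `K`
containing `proj(E)`, closed under direct summands, with the `E`-two-out-of-three
property. -/
theorem statement9 {K : Type u} [Category.{v} K] [Preadditive K] [HasZeroObject K]
    [HasShift K ℤ] [∀ n : ℤ, (shiftFunctor K n).Additive] [Pretriangulated K]
    [HasBinaryBiproducts K] [EssentiallySmall.{v} K]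
    (E : Set (Triangle K)) (hE : IsProperClass E) (hFrob : IsFrobenius E)
    (D : StableModel E) [HasBinaryBiproducts D.S] :
    (∀ J : Set D.S, IsThickSubcat J → GoodSubcat E {X : K | D.π.obj X ∈ J}) ∧
    (∀ Cs : Set K, GoodSubcat E Cs → IsThickSubcat (imageSet D.π Cs)) ∧
    (∀ J : Set D.S, IsThickSubcat J → imageSet D.π {X : K | D.π.obj X ∈ J} = J) ∧
    (∀ Cs : Set K, GoodSubcat E Cs → {X : K | D.π.obj X ∈ imageSet D.π Cs} = Cs) ∧
    (∀ J₁ J₂ : Set D.S, J₁ ⊆ J₂ →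
      {X : K | D.π.obj X ∈ J₁} ⊆ {X : K | D.π.obj X ∈ J₂}) ∧
    (∀ Cs₁ Cs₂ : Set K, Cs₁ ⊆ Cs₂ → imageSet D.π Cs₁ ⊆ imageSet D.π Cs₂) := by
  classical
  letI := D.π_essSurj
  haveI : PreservesBinaryBiproducts D.π := preservesBinaryBiproducts_of_preservesBiproducts D.π
  have preimage_good : ∀ J : Set D.S, IsThickSubcat J →
      GoodSubcat E {X : K | D.π.obj X ∈ J} := by
    intro J hJ
    obtain ⟨hiso, hzero, hshift, htri, hsum⟩ := hJ
    have h23S := thick_two_three (T := J) ⟨hiso, hzero, hshift, htri, hsum⟩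
    refine ⟨⟨?_, ?_, ?_⟩, ?_, ?_, ?_⟩
    · intro X Y e hX
      exact hiso _ _ (D.π.mapIso e) hX
    · intro X hX
      refine hzero _ ?_
      rw [IsZero.iff_id_eq_zero, ← D.π.map_id]
      rw [IsZero.iff_id_eq_zero] at hX
      rw [hX, Functor.map_zero]
    · intro X Y hX hY
      have hdist := Pretriangulated.binaryBiproductTriangle_distinguished
        (D.π.obj X) (D.π.obj Y)
      have hmid : (D.π.obj X ⊞ D.π.obj Y) ∈ J := (h23S _ hdist).2.2 hX hY
      exact hiso _ _ (D.π.mapBiprod X Y).symm hmid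
    · intro P hP
      exact hzero _ (isZero_pi_of_proj E D hP)
    · rintro X Y ⟨Z, ⟨e⟩⟩ hY
      exact hsum (D.π.obj X) (D.π.obj Y)
        ⟨D.π.obj Z, ⟨(D.π.mapBiprod X Z).symm ≪≫ D.π.mapIso e⟩⟩ hY
    · intro Tr hTr
      obtain ⟨h', hdist⟩ := D.imageTriangle_distinguished Tr hTr
      exact h23S _ hdist
  have image_thick : ∀ Cs : Set K, GoodSubcat E Cs → IsThickSubcat (imageSet D.π Cs) := by
    intro Cs hCs
    obtain ⟨⟨hiso, hzero, hsum⟩, hproj, hsummand, h23⟩ := hCs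
    have hCs' : GoodSubcat E Cs := ⟨⟨hiso, hzero, hsum⟩, hproj, hsummand, h23⟩
    have isoCl : ∀ X Y : D.S, (X ≅ Y) → X ∈ imageSet D.π Cs → Y ∈ imageSet D.π Cs := by
      rintro X Y e ⟨A, hA, ⟨eA⟩⟩
      exact ⟨A, hA, ⟨eA ≪≫ e⟩⟩
    have h1 : ∀ Y : D.S, Y ∈ imageSet D.π Cs → (Y⟦(1:ℤ)⟧ : D.S) ∈ imageSet D.π Cs := by
      rintro Y ⟨X, hX, ⟨e⟩⟩
      obtain ⟨I, i, hI, Z, g, h, hTE⟩ := hFrob.enough_inj X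
      obtain ⟨eZ⟩ := D.susp _ hTE hI
      have hZ : Z ∈ Cs := (h23 _ hTE).1 hX (hproj I ((hFrob.proj_eq_inj I).2 hI))
      exact ⟨Z, hZ, ⟨eZ ≪≫ (shiftFunctor D.S (1:ℤ)).mapIso e⟩⟩
    have hneg : ∀ Y : D.S, Y ∈ imageSet D.π Cs → (Y⟦(-1:ℤ)⟧ : D.S) ∈ imageSet D.π Cs := by
      rintro Y ⟨X, hX, ⟨e⟩⟩
      obtain ⟨P, p, hP, W, f, h, hTE⟩ := hFrob.enough_proj X
      have hW : W ∈ Cs := (h23 _ hTE).2.1 (hproj P hP) hX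
      obtain ⟨h', hdist⟩ := D.imageTriangle_distinguished _ hTE
      have hzP : IsZero (D.π.obj P) := isZero_pi_of_proj E D hP
      have : IsIso h' := (Pretriangulated.Triangle.isZero₂_iff_isIso₃ _ hdist).1 hzP
      refine ⟨W, hW, ⟨?_⟩⟩
      exact ((shiftFunctorCompIsoId D.S (1:ℤ) (-1) (by omega)).app (D.π.obj W)).symm ≪≫
        (shiftFunctor D.S (-1:ℤ)).mapIso ((asIso h').symm ≪≫ e)
    refine ⟨isoCl, ?_, ?_, ?_, ?_⟩
    · intro X hX
      have hz : IsZero (D.π.obj (0 : K)) := by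
        rw [IsZero.iff_id_eq_zero, ← D.π.map_id]
        have : (𝟙 (0 : K)) = 0 := (isZero_zero K).eq_of_src _ _
        rw [this, Functor.map_zero]
      exact ⟨0, hzero 0 (isZero_zero K), ⟨hz.iso hX⟩⟩
    · intro n X hX
      exact shift_mem_of_one_neg_one isoCl h1 hneg n X hX
    · intro Tr hTr h1' h2'
      obtain ⟨T, hTE, h', hdist, ⟨e'⟩⟩ := D.distinguished_iso_image Tr hTr
      obtain ⟨X₁, hX₁, ⟨e₁⟩⟩ := h1'
      obtain ⟨X₂, hX₂, ⟨e₂⟩⟩ := h2'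
      have hT1 : T.obj₁ ∈ Cs := good_stable_iso_closed E D hCs' hX₁
        (e₁ ≪≫ Pretriangulated.Triangle.π₁.mapIso e')
      have hT2 : T.obj₂ ∈ Cs := good_stable_iso_closed E D hCs' hX₂
        (e₂ ≪≫ Pretriangulated.Triangle.π₂.mapIso e')
      have hT3 : T.obj₃ ∈ Cs := (h23 _ hTE).1 hT1 hT2
      exact ⟨T.obj₃, hT3, ⟨(Pretriangulated.Triangle.π₃.mapIso e').symm⟩⟩
    · rintro X' Y' ⟨Z', ⟨eXZ⟩⟩ ⟨X, hX, ⟨e⟩⟩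
      set A := D.π.objPreimage X' with hA
      set B := D.π.objPreimage Z' with hB
      have eAB : D.π.obj X ≅ D.π.obj (A ⊞ B) :=
        e ≪≫ eXZ.symm ≪≫
          biprod.mapIso (D.π.objObjPreimageIso X').symm (D.π.objObjPreimageIso Z').symm ≪≫
          (D.π.mapBiprod A B).symm
      have hAB : (A ⊞ B) ∈ Cs := good_stable_iso_closed E D hCs' hX eAB
      have hAmem : A ∈ Cs := hsummand A (A ⊞ B) ⟨B, ⟨Iso.refl _⟩⟩ hAB
      exact ⟨A, hAmem, ⟨D.π.objObjPreimageIso X'⟩⟩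
  refine ⟨preimage_good, image_thick, ?_, ?_, ?_, ?_⟩
  · intro J hJ
    ext Y
    constructor
    · rintro ⟨X, hX, ⟨e⟩⟩
      exact hJ.1 _ _ e hX
    · intro hY
      exact ⟨D.π.objPreimage Y, hJ.1 _ _ (D.π.objObjPreimageIso Y).symm hY,
        ⟨D.π.objObjPreimageIso Y⟩⟩
  · intro Cs hCs
    ext X
    simp only [Set.mem_setOf_eq]
    constructor
    · rintro ⟨X', hX', ⟨e⟩⟩
      exact good_stable_iso_closed E D hCs hX' e
    · intro hX
      exact ⟨X, hX, ⟨Iso.refl _⟩⟩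
  · intro J₁ J₂ h X hX
    exact h hX
  · rintro Cs₁ Cs₂ h Y ⟨X, hX, e⟩
    exact ⟨X, h hX, e⟩


end RelStable
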